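/- Let $r \geq 0$ and let $\operatorname{Pic}(\mathcal{F}_r) = \mathbb{Z} P \oplus \mathbb{Z} Q$ with $P^2 = 0$, $P \cdot Q = 1$, $Q^2 = r$, and $-K = 2Q + (2-r)P$. Suppose $(A_1, A_2, A_3, A_4)$ is a toric system, i.e., $A_1\cdot A_2 = A_2 \cdot A_3 = A_3 \cdot A_4 = A_4 \cdot A_1 = 1$, $A_1 \cdot A_3 = A_2 \cdot A_4 = 0$, and $A_1 + A_2 + A_3 + A_4 = -K$. Then, up to cyclic permutation and reflection of the indices, either $(A_1,A_2,A_3,A_4) = (P, iP+Q, P, -(r+i)P+Q)$ for some integer $i$, or $r$ is even and $(A_1,A_2,A_3,A_4) = (-\frac{r}{2}P+Q, P+i(-\frac{r}{2}P+Q), -\frac{r}{2}P+Q, P-i(-\frac{r}{2}P+Q))$ for some integer $i$. -/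
import Mathlib


/-- The intersection form on `Pic (𝔽_r) = ℤP ⊕ ℤQ` with `P² = 0`, `P·Q = 1`, `Q² = r`. -/
def interFr (r : ℤ) (v w : ℤ × ℤ) : ℤ := v.1 * w.2 + v.2 * w.1 + r * v.2 * w.2

/-- The toric system `𝒜_{r,i} = (P, iP+Q, P, -(r+i)P+Q)` in coordinates. -/
def stdA (r i : ℤ) : Fin 4 → ℤ × ℤ := ![(1, 0), (i, 1), (1, 0), (-(r + i), 1)]

/-- For `r = 2m` even, the tuple `𝒜̃_{r,i}` in coordinates. -/
def stdAt (m i : ℤ) : Fin 4 → ℤ × ℤ :=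
  ![(-m, 1), (1 - i * m, i), (-m, 1), (1 + i * m, -i)]

/-- From a tuple `(B, C, B, D)` satisfying the toric-system equations, classify. -/
lemma aux_main (r : ℤ) (B C D : ℤ × ℤ)
    (h12 : interFr r B C = 1) (h41 : interFr r D B = 1)
    (h13 : interFr r B B = 0)
    (hs1 : B.1 + C.1 + B.1 + D.1 = 2 - r) (hs2 : B.2 + C.2 + B.2 + D.2 = 2) :
    (∃ i : ℤ, B = (1,0) ∧ C = (i,1) ∧ D = (-(r+i),1)) ∨
    (∃ m i : ℤ, r = 2*m ∧ B = (-m,1) ∧ C = (1 - i*m, i) ∧ D = (1 + i*m, -i)) := by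
  obtain ⟨a, b⟩ := B; obtain ⟨c, d⟩ := C; obtain ⟨e, f⟩ := D
  simp only [interFr] at h12 h41 h13
  simp only at hs1 hs2
  have hb : b * (2*a + r*b) = 0 := by linear_combination h13
  rcases mul_eq_zero.mp hb with hb0 | hb2
  · -- b = 0
    subst hb0
    have had : a * d = 1 := by linear_combination h12
    rcases Int.mul_eq_one_iff_eq_one_or_neg_one.mp had with ⟨ha, hd⟩ | ⟨ha, hd⟩
    · subst ha; subst hd
      have hf : f = 1 := by linear_combination h41
      left
      exact ⟨c, rfl, rfl, by simp [Prod.ext_iff]; omega⟩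
    · subst ha; subst hd
      have hf : f = -1 := by linear_combination -h41
      exfalso; omega
  · -- 2a + r*b = 0
    have key1 : b*c - a*d = 1 := by linear_combination h12 - d * hb2
    have key2 : b*e - a*f = 1 := by linear_combination h41 - f * hb2
    have hdvd : b ∣ 2 := ⟨2*c + r*d, by linear_combination -2*key1 - d*hb2⟩
    have hb0 : b ≠ 0 := by rintro rfl; obtain ⟨k, hk⟩ := hdvd; omega
    have habs : b ≤ 2 ∧ -2 ≤ b := by
      have h1 := Int.le_of_dvd (by norm_num) hdvd
      have h2 := Int.le_of_dvd (by norm_num) ((neg_dvd).mpr hdvd)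
      omega
    have : b = 1 ∨ b = -1 ∨ b = 2 ∨ b = -2 := by omega
    rcases this with rfl | rfl | rfl | rfl
    · -- b = 1 : the stdAt case, r = 2*(-a)
      right
      refine ⟨-a, d, by omega, by norm_num, ?_, ?_⟩
      · have : c = 1 + a*d := by linear_combination key1
        simp [Prod.ext_iff]; linear_combination this
      · have hf : f = -d := by omega
        subst hf
        have : e = 1 - a*d := by linear_combination key2
        simp [Prod.ext_iff]; linear_combination this
    · -- b = -1 : contradiction
      exfalso
      have : (0:ℤ) = 4 := by linear_combination key1 + key2 + hs1 + a*hs2 + hb2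
      omega
    · -- b = 2 : contradiction
      exfalso
      have : (0:ℤ) = 2 := by linear_combination -key1 - key2 - a*hs2 + 2*hs1 - hb2
      omega
    · -- b = -2 : contradiction
      exfalso
      have : (0:ℤ) = 6 := by linear_combination key1 + key2 + a*hs2 + 2*hs1 + hb2
      omega

lemma key_lemma (r : ℤ) (A : Fin 4 → ℤ × ℤ)
    (hadj : ∀ j : Fin 4, interFr r (A j) (A (j + 1)) = 1) :
    A 0 = A 2 ∨ A 1 = A 3 := by
  have e0 : interFr r (A 0) (A 1) = 1 := hadj 0
  have e1 : interFr r (A 1) (A 2) = 1 := hadj 1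
  have e2 : interFr r (A 2) (A 3) = 1 := hadj 2
  have e3 : interFr r (A 3) (A 0) = 1 := hadj 3
  simp only [interFr] at e0 e1 e2 e3
  set a0 := (A 0).1; set b0 := (A 0).2
  set a1 := (A 1).1; set b1 := (A 1).2
  set a2 := (A 2).1; set b2 := (A 2).2
  set a3 := (A 3).1; set b3 := (A 3).2
  by_contra h
  push_neg at h
  obtain ⟨h02, h13⟩ := h
  have h02' : ¬((a0 = a2) ∧ (b0 = b2)) := fun hx => h02 (Prod.ext_iff.mpr hx)
  have h13' : ¬((a1 = a3) ∧ (b1 = b3)) := fun hx => h13 (Prod.ext_iff.mpr hx)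
  -- interFr (A1 - A3) (A0 - A2) = 0
  have hvp : (a1 - a3)*(b0-b2) + (b1-b3)*((a0-a2) + r*(b0-b2)) = 0 := by
    linear_combination e0 - e1 + e2 - e3
  -- interFr (A1 + A3) (A0 - A2) = 0
  have htp : (a1 + a3)*(b0-b2) + (b1+b3)*((a0-a2) + r*(b0-b2)) = 0 := by
    linear_combination e0 - e1 - e2 + e3
  have hcp : (2*(a1*b3 - a3*b1)) * (b0-b2) = 0 := by
    linear_combination (b1+b3)*hvp - (b1-b3)*htp
  have hcq : (2*(a1*b3 - a3*b1)) * ((a0-a2) + r*(b0-b2)) = 0 := by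
    linear_combination (a1-a3)*htp - (a1+a3)*hvp
  have hcross : a1*b3 - a3*b1 = 0 := by
    rcases eq_or_ne (b0 - b2) 0 with hp | hp
    · have hq : (a0-a2) + r*(b0-b2) ≠ 0 := by
        intro hq0
        rw [hp, mul_zero, add_zero] at hq0
        exact h02' ⟨by omega, by omega⟩
      rcases mul_eq_zero.mp hcq with h' | h'
      · linarith
      · exact absurd h' hq
    · rcases mul_eq_zero.mp hcp with h' | h'
      · linarith
      · exact absurd h' hp
  -- interFr (A1 - A3) (A0 + A2) = 0
  have hvs : (a1-a3)*(b0+b2) + (b1-b3)*((a0+a2) + r*(b0+b2)) = 0 := by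
    linear_combination e0 + e1 - e2 - e3
  -- interFr (A0 + A2) (A1 + A3) = 4
  have hst : (a0+a2)*(b1+b3) + (b0+b2)*(a1+a3) + r*(b0+b2)*(b1+b3) = 4 := by
    linear_combination e0 + e1 + e2 + e3
  have h4b : 4*(b1-b3) = 0 := by
    linear_combination -(b1-b3)*hst + (b1+b3)*hvs - 2*(b0+b2)*hcross
  have h4a : 4*(a1-a3) = 0 := by
    linear_combination -(a1-a3)*hst + (a1+a3)*hvs + 2*((a0+a2) + r*(b0+b2))*hcross
  exact h13' ⟨by omega, by omega⟩

/-- Classification of toric systems on Hirzebruch surfaces (Hille–Perling):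
every toric system on `𝔽_r` is, up to cyclic permutation and reflection of the
indices, either `𝒜_{r,i}` for some `i`, or (`r` even) `𝒜̃_{r,i}` for some `i`. -/
theorem toric_system_classification_Fr (r : ℤ) (hr : 0 ≤ r) (A : Fin 4 → ℤ × ℤ)
    (hadj : ∀ j : Fin 4, interFr r (A j) (A (j + 1)) = 1)
    (hnon : ∀ j : Fin 4, interFr r (A j) (A (j + 2)) = 0)
    (hsum : ∑ j : Fin 4, A j = (2 - r, 2)) :
    (∃ i : ℤ, ∃ c : Fin 4,
      (∀ j : Fin 4, A (j + c) = stdA r i j) ∨ (∀ j : Fin 4, A (c - j) = stdA r i j)) ∨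
    (∃ m i : ℤ, r = 2 * m ∧ ∃ c : Fin 4,
      (∀ j : Fin 4, A (j + c) = stdAt m i j) ∨ (∀ j : Fin 4, A (c - j) = stdAt m i j)) := by
  rw [Fin.sum_univ_four] at hsum
  have hs1 : (A 0).1 + (A 1).1 + (A 2).1 + (A 3).1 = 2 - r := by
    simpa using congrArg Prod.fst hsum
  have hs2 : (A 0).2 + (A 1).2 + (A 2).2 + (A 3).2 = 2 := by
    simpa using congrArg Prod.snd hsum
  rcases key_lemma r A hadj with h02 | h13
  · -- A 0 = A 2
    have c1 : (A 0).1 = (A 2).1 := by rw [h02]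
    have c2 : (A 0).2 = (A 2).2 := by rw [h02]
    have hBB : interFr r (A 0) (A 0) = 0 := by
      have h : interFr r (A 0) (A 2) = 0 := hnon 0
      rwa [← h02] at h
    rcases aux_main r (A 0) (A 1) (A 3) (hadj 0) (hadj 3) hBB (by omega) (by omega) with
      ⟨i, hB, hC, hD⟩ | ⟨m, i, hrm, hB, hC, hD⟩
    · refine Or.inl ⟨i, 0, Or.inl ?_⟩
      intro j
      fin_cases j
      · exact hB
      · exact hC
      · exact h02 ▸ hB
      · exact hD
    · refine Or.inr ⟨m, i, hrm, 0, Or.inl ?_⟩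
      intro j
      fin_cases j
      · exact hB
      · exact hC
      · exact h02 ▸ hB
      · exact hD
  · -- A 1 = A 3
    have c1 : (A 1).1 = (A 3).1 := by rw [h13]
    have c2 : (A 1).2 = (A 3).2 := by rw [h13]
    have hBB : interFr r (A 1) (A 1) = 0 := by
      have h : interFr r (A 1) (A 3) = 0 := hnon 1
      rwa [← h13] at h
    rcases aux_main r (A 1) (A 2) (A 0) (hadj 1) (hadj 0) hBB (by omega) (by omega) with
      ⟨i, hB, hC, hD⟩ | ⟨m, i, hrm, hB, hC, hD⟩
    · refine Or.inl ⟨i, 1, Or.inl ?_⟩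
      intro j
      fin_cases j
      · exact hB
      · exact hC
      · exact h13 ▸ hB
      · exact hD
    · refine Or.inr ⟨m, i, hrm, 1, Or.inl ?_⟩
      intro j
      fin_cases j
      · exact hB
      · exact hC
      · exact h13 ▸ hB
      · exact hD
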